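/- Let V be a finite-dimensional complex vector space and c : V → V a conjugate-linear involution (c(a·v) = conj(a)·c(v) for a ∈ ℂ, and c ∘ c = id). Let I be a finite set with a total order ≤, F an I-filtration of V, and Γ₀, Γ₁ two I-gradings of V both splitting F, such that Γ₀(i) = c(Γ₁(i)) for all i ∈ I. Suppose g ∈ GL(V) satisfies g(Γ₀(i)) = Γ₁(i) for all i and (g − 1)(F(i)) ⊆ F(<i) for all i, and suppose s is a linear endomorphism of V with s − id nilpotent and s ∘ s = g. Then c(s(Γ₀(i))) = s(Γ₀(i)) for all i ∈ I (the median grading is real). -/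

import Mathlib

open Submodule

variable {V : Type} [AddCommGroup V] [Module ℂ V] [FiniteDimensional ℂ V]
variable {I : Type} [Fintype I]

/-- `Γ` is an `I`-grading of `V`: the family of subspaces is independent and spans `V`,
so that `V` is their internal direct sum. -/
def IsGrading (Γ : I → Submodule ℂ V) : Prop :=
  iSupIndep Γ ∧ ⨆ i, Γ i = ⊤

/-- The filtration associated to a grading `Γ` and an order `le` on `I`:
`F(Γ,≤)(i) = Σ_{j ≤ i} Γ(j)`. -/
def assocFilt (Γ : I → Submodule ℂ V) (le : I → I → Prop) (i : I) : Submodule ℂ V :=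
  ⨆ j ∈ {j | le j i}, Γ j

/-- `F` is an `I`-filtration of `V` with respect to the order `le`. -/
def IsIFiltration (le : I → I → Prop) (F : I → Submodule ℂ V) : Prop :=
  ∀ i j, le i j → F i ≤ F j

/-- `F(<i) = Σ_{j < i} F(j)`, where `j < i` means `j ≤ i` and `j ≠ i`. -/
def filtLT (le : I → I → Prop) (F : I → Submodule ℂ V) (i : I) : Submodule ℂ V :=
  ⨆ j ∈ {j | le j i ∧ j ≠ i}, F j

/-- The grading `Γ` splits the filtration `F` (with respect to `le`). -/
def SplitsF (le : I → I → Prop) (F Γ : I → Submodule ℂ V) : Prop :=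
  IsGrading Γ ∧ ∀ i, F i = assocFilt Γ le i

/-- The unipotent radical `U(F)` of the parabolic subgroup attached to the filtration `F`:
all `g ∈ GL(V)` with `(g − 1)(F(i)) ⊆ F(<i)` for all `i`. -/
def Ugrp (le : I → I → Prop) (F : I → Submodule ℂ V) : Set (V ≃ₗ[ℂ] V) :=
  {g | ∀ i, ∀ v ∈ F i, g v - v ∈ filtLT le F i}

/-!
Let `ψ(f) = c ∘ f ∘ c` be conjugation by `c`, a ring automorphism of `End V`. The endomorphism
`ψ(g) g` maps each `Γ₀(i)` into itself and moves its vectors only by elements of `F(<i)`, which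
meets `Γ₀(i)` trivially; hence `ψ(g) = g⁻¹`. A unipotent `s` lies in the algebra generated by `s²`
(Newton's method produces a unipotent square root there, and unipotent square roots commuting with
each other coincide). So `ψ(s)`, whose square is `g⁻¹`, commutes with `s`, and `ψ(s) s` is a
unipotent square root of `1`, i.e. `ψ(s) = s⁻¹`. Therefore
`c(s(Γ₀(i))) = ψ(s)(c(Γ₀(i))) = ψ(s)(g(Γ₀(i))) = s(Γ₀(i))`.
-/

section UnipotentSquareRoot

variable {K A : Type*} [CommRing K] [Ring A] [Algebra K A]

open Polynomial in
open scoped IsMulCommutative in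
theorem exists_mem_adjoin_mul_self_eq_of_isNilpotent_sub_one (h2 : IsUnit (2 : K)) {g : A}
    (hg : IsNilpotent (g - 1)) :
    ∃ r ∈ Algebra.adjoin K {g}, r * r = g ∧ IsNilpotent (r - 1) := by
  set B := Algebra.adjoin K {g}
  let g' : B := ⟨g, Algebra.self_mem_adjoin_singleton K g⟩
  have hg' : IsNilpotent (1 - g') := by
    rw [← neg_sub, isNilpotent_neg_iff]
    obtain ⟨n, hn⟩ := hg
    exact ⟨n, Subtype.ext hn⟩
  have h2' : IsUnit (2 : B) := by simpa only [map_ofNat] using h2.map (algebraMap K B)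
  obtain ⟨r, ⟨hr, hr'⟩, -⟩ := existsUnique_nilpotent_sub_and_aeval_eq_zero (S := B)
    (P := X ^ 2 - C g') (x := 1)
    (by simpa only [map_sub, aeval_X_pow, aeval_C, one_pow, Algebra.algebraMap_self,
      RingHom.id_apply] using hg')
    (by simpa only [derivative_sub, derivative_X_pow, derivative_C, sub_zero, map_mul, aeval_C,
      Algebra.algebraMap_self, RingHom.id_apply, map_natCast, Nat.cast_ofNat, aeval_X_pow,
      one_pow, mul_one] using h2')
  refine ⟨r, r.2, ?_, ?_⟩
  · simp only [map_sub, aeval_X_pow, aeval_C, Algebra.algebraMap_self, RingHom.id_apply,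
      sub_eq_zero] at hr'
    rw [← pow_two]
    exact congrArg Subtype.val hr'
  · rw [← neg_sub, isNilpotent_neg_iff]
    obtain ⟨n, hn⟩ := hr
    exact ⟨n, congrArg Subtype.val hn⟩

theorem Commute.eq_of_mul_self_eq_of_isNilpotent_sub_one (h2 : IsUnit (2 : A)) {x y : A}
    (hxy : Commute x y) (hx : IsNilpotent (x - 1)) (hy : IsNilpotent (y - 1))
    (h : x * x = y * y) : x = y := by
  have hsum : IsUnit (x + y) := by
    have hnil : IsNilpotent ((x - 1) + (y - 1)) :=
      ((hxy.sub_left (Commute.one_left y)).sub_right (Commute.one_right _)).isNilpotent_add hx hy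
    convert hnil.isUnit_add_left_of_commute h2 (Commute.ofNat_right _ 2) using 1
    rw [← one_add_one_eq_two]
    abel
  refine sub_eq_zero.mp (hsum.mul_right_eq_zero.mp ?_)
  rw [← hxy.mul_self_sub_mul_self_eq, h, sub_self]

theorem mem_adjoin_mul_self_of_isNilpotent_sub_one (h2 : IsUnit (2 : K)) {s : A}
    (hs : IsNilpotent (s - 1)) : s ∈ Algebra.adjoin K {s * s} := by
  have hss : IsNilpotent (s * s - 1) := by
    rw [← mul_one (1 : A), (Commute.one_right s).mul_self_sub_mul_self_eq']
    exact ((Commute.refl s).sub_left (Commute.one_left s) |>.add_right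
      (Commute.one_right _)).isNilpotent_mul_right hs
  obtain ⟨r, hr, hrr, hr1⟩ := exists_mem_adjoin_mul_self_eq_of_isNilpotent_sub_one h2 hss
  have hsr : Commute s r := Algebra.commute_of_mem_adjoin_singleton_of_commute hr
    ((Commute.refl s).mul_right (Commute.refl s))
  obtain rfl := hsr.eq_of_mul_self_eq_of_isNilpotent_sub_one
    (by simpa only [map_ofNat] using h2.map (algebraMap K A)) hs hr1 hrr.symm
  exact hr

theorem mul_eq_one_of_mul_self_mul_mul_self_eq_one (h2 : IsUnit (2 : K)) {s t : A}
    (hs : IsNilpotent (s - 1)) (ht : IsNilpotent (t - 1)) (h : t * t * (s * s) = 1) :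
    t * s = 1 := by
  have hts : Commute t s := by
    have hsU : IsUnit s := by simpa using hs.isUnit_add_one
    set u := (hsU.mul hsU).unit
    have htt : t * t = ↑u⁻¹ := Units.eq_inv_of_mul_eq_one_right h
    refine Algebra.commute_of_mem_adjoin_singleton_of_commute
      (mem_adjoin_mul_self_of_isNilpotent_sub_one h2 hs)
      ((Commute.units_inv_right_iff (u := u)).mp ?_)
    rw [← htt]
    exact (Commute.refl t).mul_right (Commute.refl t)
  have hts1 : IsNilpotent (t * s - 1) := by
    rw [show t * s - 1 = t * (s - 1) + (t - 1) by noncomm_ring]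
    have ht1 : Commute t (t - 1) := (Commute.refl t).sub_right (Commute.one_right t)
    have hs1 : Commute (s - 1) (t - 1) :=
      (hts.symm.sub_left (Commute.one_left t)).sub_right (Commute.one_right _)
    exact (ht1.mul_left hs1).isNilpotent_add
      ((hts.sub_right (Commute.one_right t)).isNilpotent_mul_left hs) ht
  refine (Commute.one_right _).eq_of_mul_self_eq_of_isNilpotent_sub_one
    (by simpa only [map_ofNat] using h2.map (algebraMap K A)) hts1 (by simp) ?_
  rw [mul_one, ← h, hts.symm.mul_mul_mul_comm]

end UnipotentSquareRoot

section Gradings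

variable {V : Type} [AddCommGroup V] [Module ℂ V] {I : Type} {le : I → I → Prop}
  {F Γ Γ₀ Γ₁ : I → Submodule ℂ V}

theorem map_assocFilt {σ : ℂ →+* ℂ} [RingHomSurjective σ] (f : V →ₛₗ[σ] V) (i : I) :
    (assocFilt Γ le i).map f = assocFilt (fun j ↦ (Γ j).map f) le i := by
  simp only [assocFilt, Submodule.map_iSup]

theorem map_filtLT {σ : ℂ →+* ℂ} [RingHomSurjective σ] (f : V →ₛₗ[σ] V) (i : I) :
    (filtLT le F i).map f = filtLT le (fun j ↦ (F j).map f) i := by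
  simp only [filtLT, Submodule.map_iSup]

theorem SplitsF.le_filtration [Std.Refl le] (h : SplitsF le F Γ) (i : I) : Γ i ≤ F i := by
  rw [h.2 i]
  exact le_iSup₂_of_le i (refl_of le i) le_rfl

theorem SplitsF.disjoint_filtLT [Std.Antisymm le] (h : SplitsF le F Γ) (i : I) :
    Disjoint (Γ i) (filtLT le F i) := by
  refine (h.1.1 i).mono_right (iSup₂_le fun j hj ↦ ?_)
  rw [h.2 j]
  refine iSup₂_le fun k hk ↦ le_iSup₂_of_le k (fun hki ↦ hj.2 ?_) le_rfl
  subst hki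
  exact antisymm_of le hj.1 hk

theorem SplitsF.eq_one_of_forall_mem [Std.Antisymm le] (h : SplitsF le F Γ)
    {φ : Module.End ℂ V} (hφΓ : ∀ i, ∀ v ∈ Γ i, φ v ∈ Γ i)
    (hφF : ∀ i, ∀ v ∈ Γ i, φ v - v ∈ filtLT le F i) : φ = 1 := by
  suffices ⊤ ≤ LinearMap.ker (φ - 1) from
    LinearMap.ext fun v ↦ sub_eq_zero.mp (this Submodule.mem_top)
  rw [← h.1.2]
  exact iSup_le fun i v hv ↦ Submodule.disjoint_def.mp (h.disjoint_filtLT i) _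
    (sub_mem (hφΓ i v hv) hv) (hφF i v hv)

theorem SplitsF.map_eq_self {σ : ℂ →+* ℂ} [RingHomSurjective σ] (h₀ : SplitsF le F Γ₀)
    (h₁ : SplitsF le F Γ₁) {f : V →ₛₗ[σ] V} (hf : ∀ i, (Γ₀ i).map f = Γ₁ i) (i : I) :
    (F i).map f = F i := by
  rw [h₀.2 i, map_assocFilt]
  simp only [hf]
  rw [← h₁.2 i, h₀.2 i]

theorem SplitsF.conjRingEquiv_mul_eq_one [Std.Refl le] [Std.Antisymm le] {σ σ' : ℂ →+* ℂ}
    [RingHomInvPair σ σ'] [RingHomInvPair σ' σ] (h₀ : SplitsF le F Γ₀) (h₁ : SplitsF le F Γ₁)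
    {e : V ≃ₛₗ[σ] V} (he₀ : ∀ i, (Γ₀ i).map (e : V →ₛₗ[σ] V) = Γ₁ i)
    (he₁ : ∀ i, (Γ₁ i).map (e : V →ₛₗ[σ] V) = Γ₀ i) {g : V ≃ₗ[ℂ] V}
    (hgΓ : ∀ i, (Γ₀ i).map (g : V →ₗ[ℂ] V) = Γ₁ i) (hgU : g ∈ Ugrp le F) :
    e.conjRingEquiv g * g = 1 := by
  have hgv : ∀ i, ∀ v ∈ Γ₀ i, g v ∈ Γ₁ i := fun i v hv ↦ hgΓ i ▸ mem_map_of_mem hv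
  have hw : ∀ i, ∀ v ∈ Γ₀ i, e.symm (g v) ∈ Γ₀ i := fun i v hv ↦
    (mem_map_equiv _).mp (he₀ i ▸ hgv i v hv)
  have heF : ∀ i, (filtLT le F i).map (e : V →ₛₗ[σ] V) = filtLT le F i := fun i ↦ by
    simp only [map_filtLT, h₀.map_eq_self h₁ he₀]
  refine h₀.eq_one_of_forall_mem (fun i v hv ↦ ?_) (fun i v hv ↦ ?_)
  · exact he₁ i ▸ mem_map_of_mem (hgv i _ (hw i v hv))
  · have hw' := hgU i _ (h₀.le_filtration i (hw i v hv))
    have hdiff := add_mem (heF i ▸ mem_map_of_mem hw') (hgU i v (h₀.le_filtration i hv))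
    rwa [map_sub, LinearEquiv.coe_coe, LinearEquiv.apply_symm_apply, sub_add_sub_cancel] at hdiff

end Gradings

theorem median_grading_is_real_general
    (le : I → I → Prop) (hle : IsLinearOrder I le)
    (F Γ₀ Γ₁ : I → Submodule ℂ V)
    (h₀ : SplitsF le F Γ₀) (h₁ : SplitsF le F Γ₁)
    (c : V → V)
    (hc_add : ∀ x y, c (x + y) = c x + c y)
    (hc_smul : ∀ (a : ℂ) (x : V), c (a • x) = (starRingEnd ℂ) a • c x)
    (hc_invol : ∀ x, c (c x) = x)
    (hconj : ∀ i, (Γ₀ i : Set V) = c '' (Γ₁ i : Set V))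
    (g : V ≃ₗ[ℂ] V)
    (hgΓ : ∀ i, (Γ₀ i).map (g : V →ₗ[ℂ] V) = Γ₁ i)
    (hgU : g ∈ Ugrp le F)
    (s : Module.End ℂ V) (hs : IsNilpotent (s - 1)) (hss : ∀ v, s (s v) = g v) :
    ∀ i, c '' (s '' (Γ₀ i : Set V)) = s '' (Γ₀ i : Set V) := by
  let C : V ≃ₛₗ[starRingEnd ℂ] V :=
    { toFun := c, invFun := c, map_add' := hc_add, map_smul' := hc_smul,
      left_inv := hc_invol, right_inv := hc_invol }
  have hcΓ₀ : ∀ i, c '' (Γ₀ i : Set V) = Γ₁ i := fun i ↦ by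
    rw [hconj i, Function.LeftInverse.image_image hc_invol]
  have hψg : C.conjRingEquiv g * g = 1 :=
    h₀.conjRingEquiv_mul_eq_one h₁ (fun i ↦ SetLike.coe_injective ((map_coe ..).trans (hcΓ₀ i)))
      (fun i ↦ SetLike.coe_injective ((map_coe ..).trans (hconj i).symm)) hgΓ hgU
  have hs2 : s * s = g := LinearMap.ext hss
  have hψs : C.conjRingEquiv s * s = 1 := by
    refine mul_eq_one_of_mul_self_mul_mul_self_eq_one (K := ℂ) two_ne_zero.isUnit hs ?_ ?_
    · simpa using hs.map C.conjRingEquiv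
    · rw [← map_mul, hs2, hψg]
  have hψsg : C.conjRingEquiv s * g = s := by rw [← hs2, ← mul_assoc, hψs, one_mul]
  intro i
  calc c '' (s '' (Γ₀ i : Set V)) = C.conjRingEquiv s '' (c '' (Γ₀ i : Set V)) :=
        Set.image_comm fun x ↦ by simp [C, hc_invol]
    _ = C.conjRingEquiv s '' (g '' (Γ₀ i : Set V)) := by rw [hcΓ₀, ← hgΓ, map_coe]; rfl
    _ = s '' (Γ₀ i : Set V) := by
      rw [Set.image_image]
      exact congrArg (· '' _) (funext (LinearMap.congr_fun hψsg))

/-- reality of the median grading.  If `c` is a conjugate-linear involution of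
`V`, the gradings `Γ₀, Γ₁` both split `F` and are conjugate to one another (`Γ₀ = c(Γ₁)`),
`g` is the wild monodromy taking `Γ₀` to `Γ₁`, and `s` is a unipotent square root of `g`,
then the median grading `s(Γ₀)` is real: it is preserved by `c`. -/
theorem median_grading_is_real
    (le : I → I → Prop) (hle : IsLinearOrder I le)
    (F Γ₀ Γ₁ : I → Submodule ℂ V) (hF : IsIFiltration le F)
    (h₀ : SplitsF le F Γ₀) (h₁ : SplitsF le F Γ₁)
    (c : V → V)
    (hc_add : ∀ x y, c (x + y) = c x + c y)
    (hc_smul : ∀ (a : ℂ) (x : V), c (a • x) = (starRingEnd ℂ) a • c x)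
    (hc_invol : ∀ x, c (c x) = x)
    (hconj : ∀ i, (Γ₀ i : Set V) = c '' (Γ₁ i : Set V))
    (g : V ≃ₗ[ℂ] V)
    (hgΓ : ∀ i, (Γ₀ i).map (g : V →ₗ[ℂ] V) = Γ₁ i)
    (hgU : g ∈ Ugrp le F)
    (s : Module.End ℂ V) (hs : IsNilpotent (s - 1)) (hss : ∀ v, s (s v) = g v) :
    ∀ i, c '' (s '' (Γ₀ i : Set V)) = s '' (Γ₀ i : Set V) :=
  median_grading_is_real_general le hle F Γ₀ Γ₁ h₀ h₁ c hc_add hc_smul hc_invol hconj g hgΓ hgU s hs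
    hss
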